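/- Let n ≥ 1. In the presented group Q_n = ⟨x, t | ρ_n(x,t), x^n⟩, the image of the generator x has order exactly n. -/

import Mathlib

/-!
`x ^ n = 1` holds in `Q_n`, so the order of `x` divides `n`. Conversely, in an abelian
group `ρ_n(x, t)` collapses to `x⁻ⁿ`, so `x ↦ 1`, `t ↦ 0` defines a homomorphism
`Q_n → ℤ/n` whose image of `x` has order `n`.
-/

/-- The word `ρ_k(x,t) = (t x t⁻¹) x (t x t⁻¹)⁻¹ x^{-(k+1)}`, evaluated at elements
`x`, `t` of a group. -/
def rhoWord {G : Type*} [Group G] (k : ℕ) (x t : G) : G :=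
  (t * x * t⁻¹) * x * (t * x * t⁻¹)⁻¹ * x ^ (-(k + 1 : ℤ))

theorem map_rhoWord {G H : Type*} [Group G] [Group H] (φ : G →* H) (k : ℕ) (x t : G) :
    φ (rhoWord k x t) = rhoWord k (φ x) (φ t) := by
  simp only [rhoWord, map_mul, map_inv, map_zpow]

theorem rhoWord_eq_zpow {G : Type*} [CommGroup G] (k : ℕ) (x t : G) :
    rhoWord k x t = x ^ (-(k : ℤ)) := by
  rw [rhoWord, mul_right_comm _ x, mul_inv_cancel, one_mul, ← zpow_one_add]
  congr 1
  ring

theorem PresentedGroup.orderOf_of_dvd_of_pow_mem {α : Type*} {rels : Set (FreeGroup α)} {i : α} {n : ℕ}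
    (h : FreeGroup.of i ^ n ∈ rels) : orderOf (PresentedGroup.of i : PresentedGroup rels) ∣ n :=
  orderOf_dvd_of_pow_eq_one <|
    (map_pow (PresentedGroup.mk rels) _ n).symm.trans (PresentedGroup.one_of_mem h)

abbrev qRelators (n : ℕ) : Set (FreeGroup (Fin 2)) :=
  {rhoWord n (FreeGroup.of 0) (FreeGroup.of 1), FreeGroup.of 0 ^ n}

theorem orderOf_ofAdd_one_zmod (n : ℕ) : orderOf (Multiplicative.ofAdd (1 : ZMod n)) = n := by
  rw [orderOf_ofAdd_eq_addOrderOf, ZMod.addOrderOf_one]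

def qToZMod (n : ℕ) : PresentedGroup (qRelators n) →* Multiplicative (ZMod n) :=
  PresentedGroup.toGroup (f := ![Multiplicative.ofAdd 1, 1]) <| by
    have hx : Multiplicative.ofAdd (1 : ZMod n) ^ n = 1 := by
      simpa only [orderOf_ofAdd_one_zmod] using
        pow_orderOf_eq_one (Multiplicative.ofAdd (1 : ZMod n))
    rintro r (rfl | rfl)
    · rw [map_rhoWord, rhoWord_eq_zpow, zpow_neg, zpow_natCast]
      simp [hx]
    · simp [hx]

theorem qToZMod_of_zero (n : ℕ) :
    qToZMod n (PresentedGroup.of 0) = Multiplicative.ofAdd (1 : ZMod n) :=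
  PresentedGroup.toGroup.of _

theorem orderOf_x_eq_general (n : ℕ) :
    orderOf (PresentedGroup.of 0 :
      PresentedGroup ({rhoWord n (FreeGroup.of 0) (FreeGroup.of 1),
        FreeGroup.of 0 ^ n} : Set (FreeGroup (Fin 2)))) = n := by
  have horder_dvd : orderOf (PresentedGroup.of 0 : PresentedGroup (qRelators n)) ∣ n :=
    PresentedGroup.orderOf_of_dvd_of_pow_mem (Set.mem_insert_of_mem _ rfl)
  have hdvd_order : n ∣ orderOf (PresentedGroup.of 0 : PresentedGroup (qRelators n)) := by
    simpa only [qToZMod_of_zero, orderOf_ofAdd_one_zmod] using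
      orderOf_map_dvd (qToZMod n) (PresentedGroup.of 0)
  exact Nat.dvd_antisymm horder_dvd hdvd_order

/-- In the presented group `Q_n = ⟨x, t | ρ_n(x,t), x^n⟩` (with `n ≥ 1`),
the image of the generator `x` has order exactly `n`. -/
theorem orderOf_x_eq (n : ℕ) (hn : 1 ≤ n) :
    orderOf (PresentedGroup.of 0 :
      PresentedGroup ({rhoWord n (FreeGroup.of 0) (FreeGroup.of 1),
        FreeGroup.of 0 ^ n} : Set (FreeGroup (Fin 2)))) = n :=
  orderOf_x_eq_general n
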